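/- arXiv:2205.15740 — 6 statements merged into one kernel-verified Lean document; each statement's English description precedes it below -/
import Mathlib

section
/- Let p be an odd prime and n ≥ 1. The Reidemeister spectrum of Z/p^nZ equals {p^i : 0 ≤ i ≤ n}. -/
/-! `R(φ)` is the index of the image of `id - φ`. On `ZMod (p ^ n)` this index divides `p ^ n`,
so it is a power `p ^ i` with `i ≤ n`. Conversely multiplication by a unit `u` has `R = gcd(p ^ n, 1 - u)`:
`u = 1 - p ^ i` is a unit for `i ≥ 1` since `p ^ i` is nilpotent, and `u = -1` gives `R = gcd(p ^ n, 2) = 1`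
because `p` is odd. -/

/-- The Reidemeister number of an (additive) endomorphism `φ`: the number of
`φ`-twisted conjugacy classes, where `x` and `y` are `φ`-conjugate iff
`x = z + y - φ z` for some `z`. -/
noncomputable def twistedClasses {A : Type*} [AddCommGroup A] (φ : A →+ A) : ℕ :=
  Nat.card (Quot (fun x y : A => ∃ z : A, x = z + y - φ z))

/-- The Reidemeister spectrum: the set of Reidemeister numbers of automorphisms. -/
noncomputable def reidSpec (A : Type*) [AddCommGroup A] : Set ℕ :=
  {r | ∃ φ : A ≃+ A, twistedClasses φ.toAddMonoidHom = r}

section General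

variable {A : Type*} [AddCommGroup A]

theorem twistedClasses_eq_index (φ : A →+ A) :
    twistedClasses φ = (AddMonoidHom.id A - φ).range.index := by
  refine Nat.card_congr (Quot.congrRight fun x y => ?_)
  rw [QuotientAddGroup.leftRel_apply]
  constructor
  · rintro ⟨z, rfl⟩
    exact ⟨-z, by simp only [AddMonoidHom.sub_apply, AddMonoidHom.id_apply, map_neg]; abel⟩
  · rintro ⟨w, hw⟩
    refine ⟨-w, ?_⟩
    simp only [AddMonoidHom.sub_apply, AddMonoidHom.id_apply] at hw
    rw [map_neg, neg_add_eq_iff_eq_add.mp hw.symm]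
    abel

theorem twistedClasses_dvd_card [Finite A] (φ : A →+ A) : twistedClasses φ ∣ Nat.card A := by
  rw [twistedClasses_eq_index]
  exact AddSubgroup.index_dvd_card _

end General

namespace ZMod

theorem range_mulLeft {N : ℕ} (c : ZMod N) :
    (AddMonoidHom.mulLeft c).range = AddSubgroup.zmultiples c := by
  ext y
  simp only [AddMonoidHom.mem_range, AddMonoidHom.coe_mulLeft, AddSubgroup.mem_zmultiples_iff,
    zsmul_eq_mul]
  constructor
  · rintro ⟨x, rfl⟩
    exact ⟨cast x, by rw [intCast_zmod_cast, mul_comm]⟩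
  · rintro ⟨k, rfl⟩
    exact ⟨k, mul_comm _ _⟩

theorem index_zmultiples_natCast {N : ℕ} [NeZero N] (m : ℕ) :
    (AddSubgroup.zmultiples (m : ZMod N)).index = N.gcd m := by
  have h := (AddSubgroup.zmultiples (m : ZMod N)).index_mul_card
  rw [Nat.card_zmultiples, addOrderOf_coe m (NeZero.ne N), Nat.card_zmod] at h
  have hq : 0 < N / N.gcd m :=
    Nat.div_pos (Nat.gcd_le_left m (NeZero.pos N)) (Nat.gcd_pos_of_pos_left m (NeZero.pos N))
  refine Nat.eq_of_mul_eq_mul_right hq ?_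
  rw [h, Nat.mul_div_cancel' (Nat.gcd_dvd_left N m)]

theorem twistedClasses_unit_smul {N : ℕ} [NeZero N] (u : (ZMod N)ˣ) {m : ℕ}
    (hu : 1 - (u : ZMod N) = m) :
    twistedClasses (DistribMulAction.toAddEquiv (ZMod N) u).toAddMonoidHom = N.gcd m := by
  have h : AddMonoidHom.id (ZMod N) - (DistribMulAction.toAddEquiv (ZMod N) u).toAddMonoidHom =
      AddMonoidHom.mulLeft (m : ZMod N) := by
    ext
    simp [Units.smul_def, ← hu, sub_mul]
  rw [twistedClasses_eq_index, h, range_mulLeft, index_zmultiples_natCast]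

end ZMod

theorem stmt_5_general (p n : ℕ) (hp : p.Prime) (hodd : Odd p) :
    reidSpec (ZMod (p ^ n)) = {r | ∃ i, i ≤ n ∧ r = p ^ i} := by
  have : NeZero (p ^ n) := ⟨pow_ne_zero n hp.ne_zero⟩
  ext r
  constructor
  · rintro ⟨φ, rfl⟩
    have h := twistedClasses_dvd_card φ.toAddMonoidHom
    rwa [Nat.card_zmod, Nat.dvd_prime_pow hp] at h
  · rintro ⟨i, hi, rfl⟩
    rcases i.eq_zero_or_pos with rfl | hi0
    · refine ⟨_, (ZMod.twistedClasses_unit_smul (-1) (m := 2) ?_).trans ?_⟩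
      · rw [Units.val_neg, Units.val_one]
        norm_num
      · simpa using (Nat.coprime_two_right.mpr hodd).pow_left n
    · have hnil : IsNilpotent ((p ^ i : ℕ) : ZMod (p ^ n)) :=
        ⟨n, by rw [← Nat.cast_pow, ZMod.natCast_eq_zero_iff, ← pow_mul]
               exact pow_dvd_pow p (Nat.le_mul_of_pos_left n hi0)⟩
      obtain ⟨u, hu⟩ := hnil.isUnit_one_sub
      refine ⟨_, (ZMod.twistedClasses_unit_smul u (by rw [hu, sub_sub_cancel])).trans ?_⟩
      exact Nat.gcd_eq_right (pow_dvd_pow p hi)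

theorem stmt_5 (p n : ℕ) (hp : p.Prime) (hodd : Odd p) (hn : 1 ≤ n) :
    reidSpec (ZMod (p ^ n)) = {r | ∃ i, i ≤ n ∧ r = p ^ i} :=
  stmt_5_general p n hp hodd
end

section
/- Let G_1, ..., G_n be finite groups of pairwise coprime orders and G their direct product. Then Aut(G) is isomorphic to the direct product of the Aut(G_i), via the map sending a tuple of automorphisms to the componentwise automorphism. -/
/-!
An element of `∀ i, G i` whose `i`-th coordinate is trivial has order dividing
`∏ j ≠ i, |G j|`, which is prime to `|G i|`; so every endomorphism `φ` keeps it trivial in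
coordinate `i`. Hence `φ g i = φ (mulSingle i (g i)) i`: `φ` acts coordinatewise, through its
restrictions `G i → G i`, and for an automorphism these restrictions are automorphisms.
-/

open Finset

namespace Pi

variable {ι : Type*} [DecidableEq ι] {G : ι → Type*} [∀ i, Group (G i)]

def componentEnd (φ : (∀ i, G i) →* ∀ i, G i) (i : ι) : G i →* G i :=
  (evalMonoidHom G i).comp (φ.comp (MonoidHom.mulSingle G i))

@[simp]
theorem componentEnd_apply (φ : (∀ i, G i) →* ∀ i, G i) (i : ι) (x : G i) :
    componentEnd φ i x = φ (mulSingle i x) i := rfl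

theorem componentEnd_id (i : ι) : componentEnd (MonoidHom.id (∀ i, G i)) i = MonoidHom.id _ := by
  ext x
  simp

variable [Fintype ι]

theorem pow_prod_card_erase_eq_one {g : ∀ i, G i} {i : ι} (hg : g i = 1) :
    g ^ ∏ j ∈ univ.erase i, Nat.card (G j) = 1 := by
  funext j
  rw [Pi.pow_apply, Pi.one_apply]
  by_cases hji : j = i
  · subst hji
    rw [hg, one_pow]
  · obtain ⟨m, hm⟩ := dvd_prod_of_mem (fun j => Nat.card (G j)) (mem_erase.2 ⟨hji, mem_univ j⟩)
    rw [hm, pow_mul, pow_card_eq_one', one_pow]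

theorem map_apply_eq_one_of_apply_eq_one
    (hcop : Pairwise fun i j => Nat.Coprime (Nat.card (G i)) (Nat.card (G j)))
    (φ : (∀ i, G i) →* ∀ i, G i) {g : ∀ i, G i} {i : ι} (hg : g i = 1) : φ g i = 1 := by
  have hN : (Nat.card (G i)).Coprime (∏ j ∈ univ.erase i, Nat.card (G j)) :=
    Nat.Coprime.prod_right fun j hj => hcop (ne_of_mem_erase hj).symm
  refine orderOf_eq_one_iff.mp (Nat.eq_one_of_dvd_coprimes hN (orderOf_dvd_natCard _) ?_)
  refine orderOf_dvd_of_pow_eq_one ?_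
  rw [← Pi.pow_apply, ← map_pow, pow_prod_card_erase_eq_one hg, map_one, Pi.one_apply]

theorem map_mulSingle_apply
    (hcop : Pairwise fun i j => Nat.Coprime (Nat.card (G i)) (Nat.card (G j)))
    (φ : (∀ i, G i) →* ∀ i, G i) (g : ∀ i, G i) (i : ι) :
    φ (mulSingle i (g i)) i = φ g i := by
  have hrest : ((mulSingle i (g i))⁻¹ * g) i = 1 := by simp
  calc φ (mulSingle i (g i)) i
      = φ (mulSingle i (g i)) i * φ ((mulSingle i (g i))⁻¹ * g) i := by
        rw [map_apply_eq_one_of_apply_eq_one hcop φ hrest, mul_one]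
    _ = φ g i := by rw [← Pi.mul_apply, ← map_mul, mul_inv_cancel_left]

theorem componentEnd_comp
    (hcop : Pairwise fun i j => Nat.Coprime (Nat.card (G i)) (Nat.card (G j)))
    (φ ψ : (∀ i, G i) →* ∀ i, G i) (i : ι) :
    componentEnd (φ.comp ψ) i = (componentEnd φ i).comp (componentEnd ψ i) := by
  ext x
  exact (map_mulSingle_apply hcop φ (ψ (mulSingle i x)) i).symm

def componentAut (hcop : Pairwise fun i j => Nat.Coprime (Nat.card (G i)) (Nat.card (G j)))
    (φ : MulAut (∀ i, G i)) (i : ι) : MulAut (G i) :=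
  (componentEnd φ.toMonoidHom i).toMulEquiv (componentEnd φ.symm.toMonoidHom i)
    (by rw [← componentEnd_comp hcop]; simp [componentEnd_id])
    (by rw [← componentEnd_comp hcop]; simp [componentEnd_id])

def mulAutEquivOfPairwiseCoprime
    (hcop : Pairwise fun i j => Nat.Coprime (Nat.card (G i)) (Nat.card (G j))) :
    (∀ i, MulAut (G i)) ≃* MulAut (∀ i, G i) where
  toFun := MulEquiv.piCongrRight
  invFun := componentAut hcop
  left_inv f := by
    funext i
    ext x
    simp [componentAut]
  right_inv φ := MulEquiv.ext fun g => funext (map_mulSingle_apply hcop φ.toMonoidHom g)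
  map_mul' _ _ := rfl

end Pi

theorem stmt_7_general {n : ℕ} (G : Fin n → Type*) [∀ i, Group (G i)]
    (hcop : ∀ i j, i ≠ j → Nat.Coprime (Nat.card (G i)) (Nat.card (G j))) :
    ∃ E : (∀ i, MulAut (G i)) ≃* MulAut (∀ i, G i),
      ∀ f : ∀ i, MulAut (G i), E f = MulEquiv.piCongrRight f :=
  ⟨Pi.mulAutEquivOfPairwiseCoprime fun i j => hcop i j, fun _ => rfl⟩

theorem stmt_7 {n : ℕ} (G : Fin n → Type*) [∀ i, Group (G i)] [∀ i, Finite (G i)]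
    (hcop : ∀ i j, i ≠ j → Nat.Coprime (Nat.card (G i)) (Nat.card (G j))) :
    ∃ E : (∀ i, MulAut (G i)) ≃* MulAut (∀ i, G i),
      ∀ f : ∀ i, MulAut (G i), E f = MulEquiv.piCongrRight f :=
  stmt_7_general G hcop
end

section
/- Let P = ⊕_{i=1}^n Z/p^{e_i}Z with e_1 ≤ ... ≤ e_n, and let d_1, ..., d_n be non-negative integers with d_i ≤ e_i. The subgroup Q = ⊕_{i=1}^n p^{d_i}Z/p^{e_i}Z is characteristic in P if and only if d_i ≤ d_{i+1} and e_i − d_i ≤ e_{i+1} − d_{i+1} for all i ∈ {1,...,n−1}. -/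
/-!
Write `P = ∏ Pᵢ` with `Pᵢ = ZMod (p ^ eᵢ)` and `Qᵢ = p ^ dᵢ Pᵢ`. If every homomorphism
`Pᵢ → Pⱼ` maps `Qᵢ` into `Qⱼ`, then `Q = ∏ Qᵢ` is even fully invariant, since an endomorphism
of `P` is a matrix of such maps. Conversely, for `i ≠ j` and `ψ : Pᵢ → Pⱼ` the transvection
`x ↦ x + ψ(xᵢ) eⱼ` is an automorphism of `P`, so characteristicity forces `ψ(Qᵢ) ⊆ Qⱼ`.
A homomorphism `ZMod (p ^ a) → ZMod (p ^ b)` sends `1` to a multiple of `p ^ (b - a)`, and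
`1 ↦ p ^ (b - a)` is one, so all of them map `p ^ c` into `p ^ c' ZMod (p ^ b)` iff
`c' ≤ c + (b - a)`. For monotone `e` this condition on all pairs `i, j` says exactly that `d`
and `e - d` are monotone.
-/

theorem ZMod.mem_zmultiples_natCast_iff_dvd_val {N k : ℕ} [NeZero N] (hk : k ∣ N) (a : ZMod N) :
    a ∈ AddSubgroup.zmultiples (k : ZMod N) ↔ k ∣ a.val := by
  constructor
  · rintro ⟨t, rfl⟩
    rw [← ZMod.natCast_eq_zero_iff, ZMod.natCast_val]
    change ZMod.castHom hk (ZMod k) (t • (k : ZMod N)) = 0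
    rw [map_zsmul, map_natCast, ZMod.natCast_self, smul_zero]
  · rintro ⟨m, hm⟩
    refine ⟨m, ?_⟩
    dsimp only
    rw [← ZMod.natCast_zmod_val a, hm, natCast_zsmul, nsmul_eq_mul, Nat.cast_mul, mul_comm]

theorem ZMod.natCast_pow_mem_zmultiples_iff {p b c m : ℕ} (hp : 1 < p) (hc : c ≤ b) :
    ((p ^ m : ℕ) : ZMod (p ^ b)) ∈ AddSubgroup.zmultiples ((p ^ c : ℕ) : ZMod (p ^ b)) ↔
      c ≤ m ∨ b ≤ m := by
  have : NeZero p := ⟨by omega⟩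
  rw [ZMod.mem_zmultiples_natCast_iff_dvd_val (pow_dvd_pow p hc), ZMod.val_natCast]
  rcases lt_or_ge m b with hm | hm
  · rw [Nat.mod_eq_of_lt (Nat.pow_lt_pow_right hp hm), Nat.pow_dvd_pow_iff_le_right hp]
    omega
  · rw [Nat.mod_eq_zero_of_dvd (pow_dvd_pow p hm)]
    simp [hm]

theorem ZMod.exists_addMonoidHom_apply_one {m : ℕ} {A : Type*} [AddCommGroup A] {u : A}
    (hu : m • u = 0) : ∃ ψ : ZMod m →+ A, ψ 1 = u :=
  ⟨ZMod.lift m ⟨zmultiplesHom A u, by simpa using hu⟩, by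
    simpa using ZMod.lift_coe m ⟨zmultiplesHom A u, by simpa using hu⟩ 1⟩

theorem Nat.pow_tsub_dvd_of_pow_dvd_pow_mul {p a b v : ℕ} (hp : 0 < p) (h : p ^ b ∣ p ^ a * v) :
    p ^ (b - a) ∣ v := by
  rcases le_total a b with hab | hba
  · rw [← Nat.pow_sub_mul_pow p hab, mul_comm] at h
    exact Nat.dvd_of_mul_dvd_mul_left (pow_pos hp a) h
  · simp [Nat.sub_eq_zero_of_le hba]

open AddSubgroup

theorem AddMonoidHom.map_natCast_eq_mul {R S : Type*} [NonAssocSemiring R] [NonAssocSemiring S]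
    (ψ : R →+ S) (k : ℕ) : ψ k = k * ψ 1 := by
  rw [← nsmul_one, map_nsmul, nsmul_eq_mul]

theorem ZMod.map_zmultiples_natCast_pow_le {p a b c c' : ℕ} [NeZero p] (hc' : c' ≤ b)
    (h : c' ≤ c + (b - a)) (ψ : ZMod (p ^ a) →+ ZMod (p ^ b)) :
    (zmultiples ((p ^ c : ℕ) : ZMod (p ^ a))).map ψ ≤ zmultiples ((p ^ c' : ℕ) : ZMod (p ^ b)) := by
  have hψ : ∀ k : ℕ, ψ k = ((k * (ψ 1).val : ℕ) : ZMod (p ^ b)) := fun k => by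
    rw [ψ.map_natCast_eq_mul, Nat.cast_mul, ZMod.natCast_zmod_val]
  have hval : p ^ (b - a) ∣ (ψ 1).val := by
    refine Nat.pow_tsub_dvd_of_pow_dvd_pow_mul (NeZero.pos p) ?_
    rw [← ZMod.natCast_eq_zero_iff, ← hψ, ZMod.natCast_self, map_zero]
  rw [AddMonoidHom.map_zmultiples, zmultiples_le, hψ,
    ZMod.mem_zmultiples_natCast_iff_dvd_val (pow_dvd_pow p hc'), ZMod.val_natCast,
    Nat.dvd_mod_iff (pow_dvd_pow p hc')]
  calc p ^ c' ∣ p ^ c * p ^ (b - a) := by rw [← pow_add]; exact pow_dvd_pow p h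
    _ ∣ p ^ c * (ψ 1).val := mul_dvd_mul_left _ hval

theorem ZMod.forall_map_zmultiples_natCast_pow_le_iff {p a b c c' : ℕ} (hp : 1 < p)
    (hc : c ≤ a) (hc' : c' ≤ b) :
    (∀ ψ : ZMod (p ^ a) →+ ZMod (p ^ b),
      (zmultiples ((p ^ c : ℕ) : ZMod (p ^ a))).map ψ ≤ zmultiples ((p ^ c' : ℕ) : ZMod (p ^ b))) ↔
      c' ≤ c + (b - a) := by
  have : NeZero p := ⟨by omega⟩
  refine ⟨fun hmap => ?_, fun h => ZMod.map_zmultiples_natCast_pow_le hc' h⟩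
  obtain ⟨ψ, hψ⟩ : ∃ ψ : ZMod (p ^ a) →+ ZMod (p ^ b), ψ 1 = ((p ^ (b - a) : ℕ) : ZMod (p ^ b)) := by
    refine ZMod.exists_addMonoidHom_apply_one ?_
    rw [nsmul_eq_mul, ← Nat.cast_mul, ← pow_add, ZMod.natCast_eq_zero_iff]
    exact pow_dvd_pow p (by omega)
  have hmem := zmultiples_le.mp ((AddMonoidHom.map_zmultiples ψ _).symm.trans_le (hmap ψ))
  rw [ψ.map_natCast_eq_mul, hψ, ← Nat.cast_mul, ← pow_add,
    ZMod.natCast_pow_mem_zmultiples_iff hp hc'] at hmem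
  omega

def AddEquiv.piTransvection {ι : Type*} [DecidableEq ι] {A : ι → Type*} [∀ k, AddCommGroup (A k)]
    {i j : ι} (hij : i ≠ j) (ψ : A i →+ A j) : (∀ k, A k) ≃+ (∀ k, A k) where
  toFun x := x + Pi.single j (ψ (x i))
  invFun x := x - Pi.single j (ψ (x i))
  left_inv x := by simp [Pi.single_eq_of_ne hij]
  right_inv x := by simp [Pi.single_eq_of_ne hij]
  map_add' x y := by
    simp only [Pi.add_apply, map_add, Pi.single_add]
    abel

theorem AddSubgroup.pi_characteristic_iff {ι : Type*} [Finite ι] {A : ι → Type*}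
    [∀ i, AddCommGroup (A i)] {H : ∀ i, AddSubgroup (A i)}
    (hH : ∀ i (ψ : A i →+ A i), (H i).map ψ ≤ H i) :
    (pi Set.univ H).Characteristic ↔ ∀ i j (ψ : A i →+ A j), (H i).map ψ ≤ H j := by
  classical
  rw [characteristic_iff_le_comap]
  constructor
  · intro hchar i j ψ
    rcases eq_or_ne i j with rfl | hij
    · exact hH i ψ
    rintro _ ⟨x, hx, rfl⟩
    have hsingle : Pi.single i x ∈ pi Set.univ H := (single_mem_pi i x).mpr fun _ => hx
    simpa [AddEquiv.piTransvection, Pi.single_eq_of_ne hij.symm] using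
      hchar (AddEquiv.piTransvection hij ψ) hsingle j (Set.mem_univ j)
  · intro hmap φ
    refine pi_le_iff.mpr fun i => ?_
    rintro _ ⟨x, hx, rfl⟩ j -
    exact hmap i j ((Pi.evalAddMonoidHom A j).comp
      (φ.toAddMonoidHom.comp (AddMonoidHom.single A i))) ⟨x, hx, rfl⟩

theorem Fin.monotone_iff_le_mk_succ {α : Type*} [Preorder α] {n : ℕ} {f : Fin n → α} :
    Monotone f ↔ ∀ (i : ℕ) (hi : i + 1 < n), f ⟨i, Nat.lt_of_succ_lt hi⟩ ≤ f ⟨i + 1, hi⟩ := by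
  cases n with
  | zero => exact ⟨fun _ i hi => absurd hi (by omega), fun _ => Subsingleton.monotone f⟩
  | succ n =>
    rw [Fin.monotone_iff_le_succ]
    exact ⟨fun h i hi => h ⟨i, by omega⟩, fun h i => h i (by omega)⟩

theorem forall_le_add_tsub_iff_monotone {ι : Type*} [LinearOrder ι] {e d : ι → ℕ}
    (he : Monotone e) (hde : ∀ i, d i ≤ e i) :
    (∀ i j, d j ≤ d i + (e j - e i)) ↔ Monotone d ∧ Monotone fun i => e i - d i := by
  refine ⟨fun h => ⟨fun i j hij => ?_, fun i j hij => ?_⟩, fun ⟨hd, hed⟩ i j => ?_⟩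
  · have := h j i; have := he hij; omega
  · show e i - d i ≤ e j - d j
    have := h i j; have := he hij; have := hde i; have := hde j; omega
  · rcases le_total i j with hij | hji
    · have : e i - d i ≤ e j - d j := hed hij
      have := he hij; have := hde i; have := hde j; omega
    · have := hd hji; omega

theorem stmt_10_general {p n : ℕ} (hp : p.Prime) (e d : Fin n → ℕ)
    (hmono : Monotone e) (hde : ∀ i, d i ≤ e i) :
    (AddSubgroup.pi Set.univ
        (fun i : Fin n => AddSubgroup.zmultiples ((p ^ d i : ℕ) : ZMod (p ^ e i)))
        : AddSubgroup (∀ i : Fin n, ZMod (p ^ e i))).Characteristic ↔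
      (∀ (i : ℕ) (hi : i + 1 < n),
        d ⟨i, Nat.lt_of_succ_lt hi⟩ ≤ d ⟨i + 1, hi⟩ ∧
        e ⟨i, Nat.lt_of_succ_lt hi⟩ - d ⟨i, Nat.lt_of_succ_lt hi⟩ ≤
          e ⟨i + 1, hi⟩ - d ⟨i + 1, hi⟩) := by
  have hcross i j := ZMod.forall_map_zmultiples_natCast_pow_le_iff hp.one_lt (hde i) (hde j)
  rw [AddSubgroup.pi_characteristic_iff fun i => (hcross i i).mpr (Nat.le_add_right _ _),
    forall₂_congr hcross, forall_le_add_tsub_iff_monotone hmono hde,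
    Fin.monotone_iff_le_mk_succ, Fin.monotone_iff_le_mk_succ]
  exact forall₂_and.symm

theorem stmt_10 {p n : ℕ} (hp : p.Prime) (e d : Fin n → ℕ)
    (hmono : Monotone e) (he1 : ∀ i, 1 ≤ e i) (hde : ∀ i, d i ≤ e i) :
    (AddSubgroup.pi Set.univ
        (fun i : Fin n => AddSubgroup.zmultiples ((p ^ d i : ℕ) : ZMod (p ^ e i)))
        : AddSubgroup (∀ i : Fin n, ZMod (p ^ e i))).Characteristic ↔
      (∀ (i : ℕ) (hi : i + 1 < n),
        d ⟨i, Nat.lt_of_succ_lt hi⟩ ≤ d ⟨i + 1, hi⟩ ∧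
        e ⟨i, Nat.lt_of_succ_lt hi⟩ - d ⟨i, Nat.lt_of_succ_lt hi⟩ ≤
          e ⟨i + 1, hi⟩ - d ⟨i + 1, hi⟩) :=
  stmt_10_general hp e d hmono hde
end

section
/- Let p be a prime, P a finite abelian p-group, and φ an automorphism of P. For i ∈ {1,...,p−1}, let μ_i denote multiplication by i on P. Then for each i, Fix(μ_i ∘ φ) intersects the subgroup generated by the union of Fix(μ_j ∘ φ) for j ≠ i (j ∈ {1,...,p−1}) trivially. -/
/-! The operators `j • φ - 1` are polynomials in `φ`, so they commute, and their product over
`j ≠ i` kills the subgroup generated by their kernels. On the kernel of `i • φ - 1`, however,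
`i • (j • φ - 1)` is multiplication by `j - i`, so there the product acts, up to a power of `i`,
as multiplication by `∏ (j - i)`, which is prime to `p`. In a `p`-group this forces `x = 0`. -/

open Polynomial

namespace AddMonoid.End

variable {P : Type*} [AddCommGroup P] (f : AddMonoid.End P)

theorem aeval_C_mul_X_sub_one_apply (a : ℤ) (x : P) :
    aeval f (C a * X - 1) x = a • f x - x := by
  rw [map_sub, map_mul, aeval_C, aeval_X, map_one, algebraMap_int_eq, eq_intCast]
  rfl

theorem aeval_apply_comm (q : ℤ[X]) (x : P) : f (aeval f q x) = aeval f q (f x) := by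
  have h : Commute (aeval f X) (aeval f q) := (Commute.all X q).map (aeval f)
  rw [aeval_X] at h
  exact DFunLike.congr_fun h x

theorem aeval_prod_apply_eq_zero_of_mem_closure (s : Finset ℕ) {y : P}
    (hy : y ∈ AddSubgroup.closure (⋃ j ∈ s, {x : P | j • f x = x})) :
    aeval f (∏ j ∈ s, (C (j : ℤ) * X - 1)) y = 0 := by
  induction hy using AddSubgroup.closure_induction with
  | mem z hz =>
    obtain ⟨j, hj, hzj⟩ := Set.mem_iUnion₂.mp hz
    have hker : aeval f (C (j : ℤ) * X - 1) z = 0 := by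
      rw [aeval_C_mul_X_sub_one_apply, natCast_zsmul, hzj, sub_self]
    rw [← Finset.prod_erase_mul s _ hj, map_mul, coe_mul, Function.comp_apply, hker, map_zero]
  | zero => exact map_zero _
  | add a b _ _ ha hb => rw [map_add, ha, hb, add_zero]
  | neg a _ ha => rw [map_neg, ha, neg_zero]

theorem pow_card_smul_aeval_prod_apply {i : ℤ} (t : Finset ℕ) {y : P} (hy : i • f y = y) :
    i ^ t.card • aeval f (∏ j ∈ t, (C (j : ℤ) * X - 1)) y = (∏ j ∈ t, ((j : ℤ) - i)) • y := by
  induction t using Finset.induction_on with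
  | empty => simp
  | insert a t ha ih =>
    set z := aeval f (∏ j ∈ t, (C (j : ℤ) * X - 1)) y
    have hz : i • f z = z := by rw [aeval_apply_comm, ← map_zsmul, hy]
    have hstep : i • ((a : ℤ) • f z - z) = ((a : ℤ) - i) • z := by
      rw [smul_sub, smul_comm, hz, sub_smul]
    rw [Finset.prod_insert ha, Finset.prod_insert ha, map_mul, coe_mul, Function.comp_apply,
      Finset.card_insert_of_notMem ha, pow_succ, mul_smul, aeval_C_mul_X_sub_one_apply, hstep,
      smul_comm, ih, mul_smul, smul_comm]

end AddMonoid.End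

theorem eq_zero_of_zsmul_eq_zero_of_isCoprime {G : Type*} [AddCommGroup G] {x : G} {m n : ℤ}
    (hm : m • x = 0) (hn : n • x = 0) (h : IsCoprime m n) : x = 0 := by
  obtain ⟨u, v, huv⟩ := h
  calc x = (u * m + v * n) • x := by rw [huv, one_smul]
    _ = 0 := by rw [add_smul, mul_smul, mul_smul, hm, hn, smul_zero, smul_zero, add_zero]

theorem Nat.Prime.not_dvd_prod_Icc_erase_sub {p i : ℕ} (hp : p.Prime) (hi : i ≤ p - 1) :
    ¬ (p : ℤ) ∣ ∏ j ∈ (Finset.Icc 1 (p - 1)).erase i, ((j : ℤ) - i) := by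
  intro hdvd
  obtain ⟨j, hj, hpj⟩ := (Nat.prime_iff_prime_int.mp hp).exists_mem_finset_dvd hdvd
  obtain ⟨hji, hj⟩ := Finset.mem_erase.mp hj
  rw [Finset.mem_Icc] at hj
  have : (j : ℤ) - i = 0 := Int.eq_zero_of_abs_lt_dvd hpj (by rw [abs_lt]; omega)
  omega

theorem stmt_12_general {p : ℕ} (hp : p.Prime) {P : Type*} [AddCommGroup P]
    (hP : ∃ k : ℕ, Nat.card P = p ^ k) (φ : P ≃+ P)
    (i : ℕ) (hi2 : i ≤ p - 1) :
    {x : P | i • φ x = x} ∩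
      (AddSubgroup.closure
        (⋃ j ∈ (Finset.Icc 1 (p - 1)).erase i, {x : P | j • φ x = x}) : Set P)
      = {0} := by
  obtain ⟨k, hk⟩ := hP
  refine Set.eq_singleton_iff_unique_mem.mpr ⟨⟨by simp, zero_mem _⟩, ?_⟩
  rintro x ⟨hx, hcl⟩
  let f : AddMonoid.End P := φ.toAddMonoidHom
  have hfix : (i : ℤ) • f x = x := by rw [natCast_zsmul]; exact hx
  have hprod : (∏ j ∈ (Finset.Icc 1 (p - 1)).erase i, ((j : ℤ) - i)) • x = 0 := by
    rw [← f.pow_card_smul_aeval_prod_apply _ hfix,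
      f.aeval_prod_apply_eq_zero_of_mem_closure _ hcl, smul_zero]
  have hcard : ((p : ℤ) ^ k) • x = 0 := by
    rw [← Nat.cast_pow, ← hk, natCast_zsmul, card_nsmul_eq_zero']
  have hcop := ((Nat.prime_iff_prime_int.mp hp).coprime_iff_not_dvd.mpr
    (hp.not_dvd_prod_Icc_erase_sub hi2)).symm.pow_right (n := k)
  exact eq_zero_of_zsmul_eq_zero_of_isCoprime hprod hcard hcop

theorem stmt_12 {p : ℕ} (hp : p.Prime) {P : Type*} [AddCommGroup P] [Finite P]
    (hP : ∃ k : ℕ, Nat.card P = p ^ k) (φ : P ≃+ P)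
    (i : ℕ) (hi1 : 1 ≤ i) (hi2 : i ≤ p - 1) :
    {x : P | i • φ x = x} ∩
      (AddSubgroup.closure
        (⋃ j ∈ (Finset.Icc 1 (p - 1)).erase i, {x : P | j • φ x = x}) : Set P)
      = {0} :=
  stmt_12_general hp hP φ i hi2
end

section
/- Let p be a prime, P a finite abelian p-group, and φ an automorphism of P. Then the product over i = 1, ..., p−1 of |Fix(μ_i ∘ φ)| is at most |P|, where μ_i is multiplication by i. -/
/-!
Applying `c • φ - 1` to a relation `∑ xᵢ = 0` with `cᵢ • φ xᵢ = xᵢ` kills the summand with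
`cᵢ = c` and turns each other summand into `(c - cᵢ) • φ xᵢ`, which lies in the same fixed
subgroup. Since the differences `i - j` of distinct `1 ≤ i, j ≤ p - 1` are prime to `p`, they act
injectively on the `p`-group `P`, so induction on the number of summands shows that the fixed
subgroups are independent. Summation then embeds their product into `P`.
-/

theorem IsCoprime.isSMulRegular_of_smul_eq_zero {R M : Type*} [CommRing R] [AddCommGroup M]
    [Module R M] {a n : R} (h : IsCoprime a n) (ha : ∀ x : M, a • x = 0) :
    IsSMulRegular M n := by
  intro x y (hxy : n • x = n • y)
  obtain ⟨u, v, huv⟩ := h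
  rw [← sub_eq_zero, ← one_smul R (x - y), ← huv, add_smul, mul_smul, mul_smul, ha, smul_sub,
    hxy, sub_self, smul_zero, smul_zero, add_zero]

theorem isSMulRegular_int_of_natCard_eq_prime_pow {M : Type*} [AddCommGroup M] [Finite M]
    {p k : ℕ} (hp : p.Prime) (hM : Nat.card M = p ^ k) {n : ℤ} (hn : ¬(p : ℤ) ∣ n) :
    IsSMulRegular M n := by
  have hcop : IsCoprime ((p : ℤ) ^ k) n :=
    ((Nat.prime_iff_prime_int.mp hp).irreducible.coprime_iff_not_dvd.mpr hn).pow_left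
  refine hcop.isSMulRegular_of_smul_eq_zero fun x => ?_
  rw [← Nat.cast_pow, natCast_zsmul, ← hM, card_nsmul_eq_zero']

theorem not_dvd_natCast_sub_of_mem_Icc {p i j : ℕ} (hi : i ∈ Finset.Icc 1 (p - 1))
    (hj : j ∈ Finset.Icc 1 (p - 1)) (hij : i ≠ j) : ¬(p : ℤ) ∣ (i : ℤ) - j := by
  rw [Finset.mem_Icc] at hi hj
  intro hdvd
  have hzero := Int.eq_zero_of_abs_lt_dvd hdvd (abs_lt.mpr ⟨by omega, by omega⟩)
  omega

namespace Module.End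

variable {ι R M : Type*} [CommRing R] [AddCommGroup M] [Module R M]

theorem mem_ker_smul_sub_one {f : End R M} {c : R} {x : M} :
    x ∈ LinearMap.ker (c • f - 1) ↔ c • f x = x := by
  simp [sub_eq_zero]

theorem iSupIndep_ker_smul_sub_one (f : End R M) (c : ι → R)
    (hc : ∀ i j, i ≠ j → IsSMulRegular M (c i - c j)) :
    iSupIndep fun i => LinearMap.ker (c i • f - 1) := by
  classical
  rw [iSupIndep_iff_finsetSum_eq_zero_imp_eq_zero]
  intro s
  induction s using Finset.induction_on with
  | empty => simp
  | insert a t ha ih =>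
    intro v hv hsum
    simp only [mem_ker_smul_sub_one] at hv
    have hw : ∀ i ∈ insert a t, (c a - c i) • f (v i) = c a • f (v i) - v i := fun i hi => by
      rw [sub_smul, hv i hi]
    have hw_mem : ∀ i ∈ t, (c a - c i) • f (v i) ∈ LinearMap.ker (c i • f - 1) := fun i hi => by
      rw [mem_ker_smul_sub_one, map_smul, smul_comm, ← map_smul, hv i (Finset.mem_insert_of_mem hi)]
    have hw_sum : ∑ i ∈ t, (c a - c i) • f (v i) = 0 := by
      have : ∑ i ∈ insert a t, (c a - c i) • f (v i) = 0 := by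
        rw [Finset.sum_congr rfl hw, Finset.sum_sub_distrib, ← Finset.smul_sum, ← map_sum, hsum,
          map_zero, smul_zero, sub_zero]
      rwa [Finset.sum_insert ha, sub_self, zero_smul, zero_add] at this
    have ht : ∀ i ∈ t, v i = 0 := fun i hi => by
      have : (c a - c i) • f (v i) = (c a - c i) • (0 : M) := by
        rw [ih _ hw_mem hw_sum i hi, smul_zero]
      rw [← hv i (Finset.mem_insert_of_mem hi), hc a i (by rintro rfl; exact ha hi) this,
        smul_zero]
    rw [Finset.sum_insert ha, Finset.sum_eq_zero ht, add_zero] at hsum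
    exact (Finset.forall_mem_insert _ _ _).mpr ⟨hsum, ht⟩

end Module.End

theorem iSupIndep.prod_natCard_le {ι R M : Type*} [Fintype ι] [Ring R] [AddCommGroup M]
    [Module R M] [Finite M] {V : ι → Submodule R M} (h : iSupIndep V) :
    ∏ i, Nat.card (V i) ≤ Nat.card M := by
  rw [← Nat.card_pi]
  refine Nat.card_le_card_of_injective (fun v => ∑ i, (v i : M)) fun v w hvw => ?_
  funext i
  exact Subtype.ext <| (iSupIndep_iff_finsetSum_eq_imp_eq V).mp h Finset.univ (fun i => v i)
    (fun i => w i) (fun i _ => ⟨(v i).2, (w i).2⟩) hvw i (Finset.mem_univ i)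

theorem stmt_13 {p : ℕ} (hp : p.Prime) {P : Type*} [AddCommGroup P] [Finite P]
    (hP : ∃ k : ℕ, Nat.card P = p ^ k) (φ : P ≃+ P) :
    ∏ i ∈ Finset.Icc 1 (p - 1), Nat.card {x : P // i • φ x = x} ≤ Nat.card P := by
  obtain ⟨k, hk⟩ := hP
  let f : Module.End ℤ P := φ.toAddMonoidHom.toIntLinearMap
  let c : Finset.Icc 1 (p - 1) → ℤ := fun i => (i : ℕ)
  have hindep : iSupIndep fun i => LinearMap.ker (c i • f - 1) :=
    f.iSupIndep_ker_smul_sub_one c fun i j hij =>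
      isSMulRegular_int_of_natCard_eq_prime_pow hp hk
        (not_dvd_natCast_sub_of_mem_Icc i.2 j.2 (Subtype.coe_ne_coe.mpr hij))
  calc ∏ i ∈ Finset.Icc 1 (p - 1), Nat.card {x : P // i • φ x = x}
      = ∏ i, Nat.card (LinearMap.ker (c i • f - 1)) := by
        rw [← Finset.prod_coe_sort]
        refine Finset.prod_congr rfl fun i _ => Nat.card_congr <| Equiv.subtypeEquivRight
          fun x => ?_
        rw [Module.End.mem_ker_smul_sub_one]
        simp [c, f, natCast_zsmul]
    _ ≤ Nat.card P := hindep.prod_natCard_le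
end

section
/- Let p be a prime, n ≥ 1, and P = Z/p^nZ ⊕ Z/p^{n+1}Z. The automorphism φ of P given by φ(x, y) = (x + y, px + y) satisfies |Fix(φ)| = p, and for each i ∈ {2, ..., p−1} the map (x,y) ↦ i·φ(x,y) has only the trivial fixed point. -/
/-!
A point `(x, y)` is fixed by `φ` exactly when `x = 0` and `y` reduces to `0` mod `p ^ n`, so the
fixed points form the kernel of `ℤ/p^(n+1) → ℤ/p^n`, of order `p`.
If `i • φ (x, y) = (x, y)` with `i ≢ 0, 1 mod p`, eliminating `ȳ` from the two coordinate
equations (read mod `p ^ n`) gives `((i - 1) ^ 2 - i ^ 2 p) x = 0`; the coefficient is prime to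
`p`, hence a unit, so `x = 0`, and then `(i - 1) y = 0` forces `y = 0`.
-/

lemma ZMod.card_ker_castHom {m k : ℕ} (h : m ∣ k) :
    Nat.card (ZMod.castHom h (ZMod m)).toAddMonoidHom.ker * m = k := by
  set f := (ZMod.castHom h (ZMod m)).toAddMonoidHom
  have hrange : f.range = ⊤ := AddMonoidHom.range_eq_top.mpr (ZMod.ringHom_surjective _)
  calc Nat.card f.ker * m = Nat.card f.ker * f.ker.index := by
        rw [AddSubgroup.index_ker, hrange, AddSubgroup.card_top, Nat.card_zmod]
    _ = k := by rw [AddSubgroup.card_mul_index, Nat.card_zmod]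

lemma ZMod.isUnit_intCast_of_not_dvd {p : ℕ} (hp : p.Prime) (k : ℕ) {a : ℤ}
    (h : ¬ (p : ℤ) ∣ a) : IsUnit (a : ZMod (p ^ k)) := by
  have : IsCoprime a ((p ^ k : ℕ) : ℤ) := by
    push_cast
    exact ((Nat.prime_iff_prime_int.mp hp).coprime_iff_not_dvd.mpr h).symm.pow_right
  exact (ZMod.unitOfIsCoprime a this).isUnit

lemma natCast_mul_val_eq_zero_iff {p n : ℕ} (hp : p ≠ 0) (x : ZMod (p ^ n)) :
    (p : ZMod (p ^ (n + 1))) * (x.val : ZMod (p ^ (n + 1))) = 0 ↔ x = 0 := by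
  have : NeZero (p ^ n) := ⟨pow_ne_zero n hp⟩
  rw [← Nat.cast_mul, ZMod.natCast_eq_zero_iff, pow_succ', Nat.mul_dvd_mul_iff_left hp.bot_lt,
    ← ZMod.natCast_eq_zero_iff, ZMod.natCast_zmod_val]

def phi (p n : ℕ) (z : ZMod (p ^ n) × ZMod (p ^ (n + 1))) : ZMod (p ^ n) × ZMod (p ^ (n + 1)) :=
  (z.1 + ZMod.castHom (pow_dvd_pow p (Nat.le_succ n)) (ZMod (p ^ n)) z.2,
    (p : ZMod (p ^ (n + 1))) * (z.1.val : ZMod (p ^ (n + 1))) + z.2)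

lemma phi_eq_self_iff {p n : ℕ} (hp : p ≠ 0) (z : ZMod (p ^ n) × ZMod (p ^ (n + 1))) :
    phi p n z = z ↔ z.1 = 0 ∧
      z.2 ∈ (ZMod.castHom (pow_dvd_pow p (Nat.le_succ n)) (ZMod (p ^ n))).toAddMonoidHom.ker := by
  simp only [phi, Prod.ext_iff, add_eq_left, add_eq_right, natCast_mul_val_eq_zero_iff hp]
  exact and_comm

lemma card_fixedPoints_phi {p n : ℕ} (hp : p ≠ 0) :
    Nat.card {z // phi p n z = z} = p := by
  set K := (ZMod.castHom (pow_dvd_pow p (Nat.le_succ n)) (ZMod (p ^ n))).toAddMonoidHom.ker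
  have e : {z // phi p n z = z} ≃ K :=
    { toFun z := ⟨z.1.2, ((phi_eq_self_iff hp z.1).mp z.2).2⟩
      invFun y := ⟨(0, y), (phi_eq_self_iff hp _).mpr ⟨rfl, y.2⟩⟩
      left_inv z := Subtype.ext (Prod.ext ((phi_eq_self_iff hp z.1).mp z.2).1.symm rfl)
      right_inv _ := rfl }
  rw [Nat.card_congr e]
  exact Nat.eq_of_mul_eq_mul_right (pow_pos hp.bot_lt n) (by rw [ZMod.card_ker_castHom, pow_succ'])

lemma eq_zero_of_smul_phi_eq_self {p n i : ℕ} (hp : p.Prime) (hi : 2 ≤ i) (hip : i ≤ p - 1)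
    {z : ZMod (p ^ n) × ZMod (p ^ (n + 1))} (h : i • phi p n z = z) : z = 0 := by
  obtain ⟨x, y⟩ := z
  have hpi : ¬ (p : ℤ) ∣ (i : ℤ) - 1 := fun hdvd => by
    have := Int.le_of_dvd (by omega) hdvd
    omega
  have hdet : ¬ (p : ℤ) ∣ ((i : ℤ) - 1) ^ 2 - i ^ 2 * p := fun hdvd =>
    hpi <| (Nat.prime_iff_prime_int.mp hp).dvd_of_dvd_pow <|
      (dvd_sub_left (dvd_mul_left _ _)).mp hdvd
  have hdetU : IsUnit (((i : ZMod (p ^ n)) - 1) ^ 2 - i ^ 2 * p) := by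
    exact_mod_cast ZMod.isUnit_intCast_of_not_dvd hp n hdet
  have hiU : IsUnit ((i : ZMod (p ^ (n + 1))) - 1) := by
    exact_mod_cast ZMod.isUnit_intCast_of_not_dvd hp (n + 1) hpi
  simp only [phi, Prod.smul_mk, nsmul_eq_mul, Prod.mk.injEq] at h
  obtain ⟨h1, h2⟩ := h
  set ybar := ZMod.castHom (pow_dvd_pow p (Nat.le_succ n)) (ZMod (p ^ n)) y
  have h2' : (i : ZMod (p ^ n)) * (p * x + ybar) = ybar := by
    have : NeZero (p ^ n) := ⟨pow_ne_zero n hp.ne_zero⟩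
    have := congrArg (ZMod.castHom (pow_dvd_pow p (Nat.le_succ n)) (ZMod (p ^ n))) h2
    rwa [map_mul, map_add, map_mul, map_natCast, map_natCast, map_natCast, ZMod.natCast_zmod_val]
      at this
  have hx : x = 0 := hdetU.mul_right_eq_zero.mp (by linear_combination (↑i - 1) * h1 - ↑i * h2')
  subst hx
  simp only [ZMod.val_zero, Nat.cast_zero, mul_zero, zero_add] at h2
  have hy : y = 0 := hiU.mul_right_eq_zero.mp (by linear_combination h2)
  exact Prod.ext rfl hy

theorem stmt_16_general {p n : ℕ} (hp : p.Prime) :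
    Nat.card {z : ZMod (p ^ n) × ZMod (p ^ (n + 1)) //
        (z.1 + ZMod.castHom (pow_dvd_pow p (Nat.le_succ n)) (ZMod (p ^ n)) z.2,
          (p : ZMod (p ^ (n + 1))) * (z.1.val : ZMod (p ^ (n + 1))) + z.2) = z} = p ∧
    ∀ i : ℕ, 2 ≤ i → i ≤ p - 1 →
      ∀ z : ZMod (p ^ n) × ZMod (p ^ (n + 1)),
        i • (z.1 + ZMod.castHom (pow_dvd_pow p (Nat.le_succ n)) (ZMod (p ^ n)) z.2,
          (p : ZMod (p ^ (n + 1))) * (z.1.val : ZMod (p ^ (n + 1))) + z.2) = z →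
        z = 0 :=
  ⟨card_fixedPoints_phi hp.ne_zero, fun _ hi hip _ h => eq_zero_of_smul_phi_eq_self hp hi hip h⟩

theorem stmt_16 {p n : ℕ} (hp : p.Prime) (hn : 1 ≤ n) :
    Nat.card {z : ZMod (p ^ n) × ZMod (p ^ (n + 1)) //
        (z.1 + ZMod.castHom (pow_dvd_pow p (Nat.le_succ n)) (ZMod (p ^ n)) z.2,
          (p : ZMod (p ^ (n + 1))) * (z.1.val : ZMod (p ^ (n + 1))) + z.2) = z} = p ∧
    ∀ i : ℕ, 2 ≤ i → i ≤ p - 1 →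
      ∀ z : ZMod (p ^ n) × ZMod (p ^ (n + 1)),
        i • (z.1 + ZMod.castHom (pow_dvd_pow p (Nat.le_succ n)) (ZMod (p ^ n)) z.2,
          (p : ZMod (p ^ (n + 1))) * (z.1.val : ZMod (p ^ (n + 1))) + z.2) = z →
        z = 0 :=
  stmt_16_general hp
end
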